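/- Let X be a Banach space with a Schauder basis (e_i). Then (e_i) is equal signs additive if and only if it is 1-convex block homogeneous. -/

import Mathlib

open Filter

noncomputable section

variable {X : Type*} [NormedAddCommGroup X] [NormedSpace ℝ X]
variable {Y : Type*} [NormedAddCommGroup Y] [NormedSpace ℝ Y]

/-- The finite linear combination `∑_{i<n} a i • e i` of the first `n` terms of `e`. -/
def combo (e : ℕ → X) (a : ℕ → ℝ) (n : ℕ) : X :=
  ∑ i ∈ Finset.range n, a i • e i

/-- Two sequences are equivalent if the norms of corresponding finite linear
combinations are two-sided comparable with uniform constants. -/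
def SeqEquiv (x : ℕ → X) (y : ℕ → Y) : Prop :=
  ∃ c C : ℝ, 0 < c ∧ 0 < C ∧ ∀ (n : ℕ) (a : ℕ → ℝ),
    c * ‖combo x a n‖ ≤ ‖combo y a n‖ ∧ ‖combo y a n‖ ≤ C * ‖combo x a n‖

/-- Two sequences are isometrically equivalent. -/
def IsomEquiv (x : ℕ → X) (y : ℕ → Y) : Prop :=
  ∀ (n : ℕ) (a : ℕ → ℝ), ‖combo x a n‖ = ‖combo y a n‖

/-- A Schauder basic sequence: nonzero terms satisfying Grunblum's criterion. -/
def IsBasicSeq (e : ℕ → X) : Prop :=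
  (∀ i, e i ≠ 0) ∧ ∃ K : ℝ, 1 ≤ K ∧ ∀ (a : ℕ → ℝ) (n m : ℕ), n ≤ m →
    ‖combo e a n‖ ≤ K * ‖combo e a m‖

/-- A Schauder basis of the whole space: a basic sequence with dense linear span. -/
def IsSchauderBasis (e : ℕ → X) : Prop :=
  IsBasicSeq e ∧ (Submodule.span ℝ (Set.range e)).topologicalClosure = ⊤

/-- A spreading sequence: equivalent to all of its subsequences. -/
def IsSpreadingSeq (e : ℕ → X) : Prop :=
  ∀ φ : ℕ → ℕ, StrictMono φ → SeqEquiv e (fun i => e (φ i))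

/-- A 1-spreading sequence: isometrically equivalent to all of its subsequences. -/
def IsOneSpreading (e : ℕ → X) : Prop :=
  ∀ φ : ℕ → ℕ, StrictMono φ → IsomEquiv e (fun i => e (φ i))

/-- An unconditional sequence: changing signs of coefficients changes norms by at
most a uniform constant. -/
def IsUnconditionalSeq (e : ℕ → X) : Prop :=
  ∃ C : ℝ, 0 < C ∧ ∀ (n : ℕ) (a ε : ℕ → ℝ), (∀ i, ε i = 1 ∨ ε i = -1) →
    ‖combo e (fun i => ε i * a i) n‖ ≤ C * ‖combo e a n‖

/-- A suppression unconditional sequence: deleting coordinates does not increase norms. -/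
def IsSuppressionUnconditional (e : ℕ → X) : Prop :=
  ∀ (n : ℕ) (a : ℕ → ℝ) (S : Finset ℕ),
    ‖∑ i ∈ Finset.range n ∩ S, a i • e i‖ ≤ ‖combo e a n‖

/-- `w` is a convex block sequence of `x`. -/
def IsConvexBlock (x : ℕ → X) (w : ℕ → X) : Prop :=
  ∃ (F : ℕ → Finset ℕ) (l : ℕ → ℝ),
    (∀ k, (F k).Nonempty) ∧
    (∀ k, ∀ i ∈ F k, ∀ j ∈ F (k + 1), i < j) ∧
    (∀ i, 0 ≤ l i) ∧ (∀ k, ∑ i ∈ F k, l i = 1) ∧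
    (∀ k, w k = ∑ i ∈ F k, l i • x i)

/-- A convex block homogeneous sequence: equivalent to all of its convex block sequences. -/
def IsConvexBlockHomogeneous (e : ℕ → X) : Prop :=
  ∀ w : ℕ → X, IsConvexBlock e w → SeqEquiv e w

/-- A 1-convex block homogeneous sequence: isometrically equivalent to all of its
convex block sequences. -/
def IsOneConvexBlockHomogeneous (e : ℕ → X) : Prop :=
  ∀ w : ℕ → X, IsConvexBlock e w → IsomEquiv e w

/-- An equal signs additive (ESA) sequence. -/
def IsESA (e : ℕ → X) : Prop :=
  ∀ (a : ℕ → ℝ) (n k : ℕ), k + 1 < n → 0 ≤ a k * a (k + 1) →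
    ‖combo e a n + a (k + 1) • (e k - e (k + 1))‖ = ‖combo e a n‖

/-- The `i`-th block average of length `N` of the sequence `e`. -/
def blockAvg (e : ℕ → X) (i N : ℕ) : X :=
  (N : ℝ)⁻¹ • ∑ j ∈ Finset.Ico (i * N) ((i + 1) * N), e j

/-- `z` is the convex block homogeneous part of `e`: the norm of linear combinations
of `z` is the limit of the norms of corresponding combinations of long block averages. -/
def IsCBHPart (e : ℕ → X) (z : ℕ → Y) : Prop :=
  ∀ (n : ℕ) (a : ℕ → ℝ),
    Tendsto (fun N => ‖∑ i ∈ Finset.range n, a i • blockAvg e i N‖) atTop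
      (nhds ‖combo z a n‖)

/-- The unconditional part `u_i = e_{2i} - e_{2i-1}` (0-indexed) of a spreading sequence. -/
def uncondPart (e : ℕ → X) : ℕ → X := fun i => e (2 * i + 1) - e (2 * i)

/-- A (finitely supported) block sequence of `e`: vectors with successive supports. -/
def IsBlockSeq (e : ℕ → X) (x : ℕ → X) : Prop :=
  ∃ (A : ℕ → Finset ℕ) (b : ℕ → ℝ),
    (∀ k, ∀ i ∈ A k, ∀ j ∈ A (k + 1), i < j) ∧
    ∀ k, x k = ∑ i ∈ A k, b i • e i

/-- A block sequence of averages of `e`. -/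
def IsBlockOfAverages (e : ℕ → X) (x : ℕ → X) : Prop :=
  ∃ A : ℕ → Finset ℕ,
    (∀ k, (A k).Nonempty) ∧ (∀ k, ∀ i ∈ A k, ∀ j ∈ A (k + 1), i < j) ∧
    ∀ k, x k = ((A k).card : ℝ)⁻¹ • ∑ i ∈ A k, e i

/-- A seminormalized sequence. -/
def IsSeminormalized (x : ℕ → X) : Prop :=
  ∃ c C : ℝ, 0 < c ∧ ∀ k, c ≤ ‖x k‖ ∧ ‖x k‖ ≤ C

/-- A strongly summing sequence. -/
def StronglySumming (e : ℕ → X) : Prop :=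
  ∀ a : ℕ → ℝ, (∃ M : ℝ, ∀ n, ‖combo e a n‖ ≤ M) →
    ∃ L : ℝ, Tendsto (fun n => ∑ i ∈ Finset.range n, a i) atTop (nhds L)

/-- A weakly Cauchy sequence. -/
def IsWeakCauchy (x : ℕ → X) : Prop :=
  ∀ f : StrongDual ℝ X, ∃ L : ℝ, Tendsto (fun i => f (x i)) atTop (nhds L)

/-- A non-trivial weak Cauchy sequence: weakly Cauchy but not weakly convergent. -/
def IsNontrivialWeakCauchy (x : ℕ → X) : Prop :=
  IsWeakCauchy x ∧ ¬ ∃ x₀ : X, ∀ f : StrongDual ℝ X,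
    Tendsto (fun i => f (x i)) atTop (nhds (f x₀))

/-- The sequence `x` generates the sequence `e` as a spreading model. -/
def GeneratesSpreadingModel (x : ℕ → X) (e : ℕ → Y) : Prop :=
  ∀ (n : ℕ) (ε : ℝ), 0 < ε → ∃ n₀ : ℕ, ∀ k : ℕ → ℕ, StrictMono k → n₀ ≤ k 0 →
    ∀ a : ℕ → ℝ, (∀ i, |a i| ≤ 1) →
      |‖∑ i ∈ Finset.range n, a i • x (k i)‖ - ‖combo e a n‖| < ε

end

section Aux
variable {X : Type*} [NormedAddCommGroup X] [NormedSpace ℝ X]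

lemma esa_merge {e : ℕ → X} (he : IsESA e) (c d : ℕ → ℝ) (m k : ℕ)
    (hk : k + 1 < m) (hsign : 0 ≤ c k * c (k + 1))
    (hd1 : d k = c k + c (k + 1)) (hd2 : d (k + 1) = 0)
    (hd3 : ∀ i, i ≠ k → i ≠ k + 1 → d i = c i) :
    ‖combo e d m‖ = ‖combo e c m‖ := by
  have hcd : combo e d m = combo e c m + c (k + 1) • (e k - e (k + 1)) := by
    have h1 : combo e d m - combo e c m = ∑ i ∈ Finset.range m, (d i - c i) • e i := by
      simp [combo, sub_smul, Finset.sum_sub_distrib]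
    have h2 : ∑ i ∈ Finset.range m, (d i - c i) • e i
        = ∑ i ∈ ({k, k + 1} : Finset ℕ), (d i - c i) • e i := by
      refine (Finset.sum_subset ?_ ?_).symm
      · intro i hi
        simp only [Finset.mem_insert, Finset.mem_singleton] at hi
        rcases hi with rfl | rfl <;> simp [Finset.mem_range] <;> omega
      · intro i _ hi
        simp only [Finset.mem_insert, Finset.mem_singleton, not_or] at hi
        rw [hd3 i hi.1 hi.2]; simp
    rw [Finset.sum_pair (by omega : k ≠ k + 1), hd1, hd2] at h2
    have h3 : combo e d m - combo e c m = c (k + 1) • (e k - e (k + 1)) := by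
      rw [h1, h2, smul_sub]
      module
    linear_combination (norm := module) h3
  rw [hcd]
  exact he c m k hk hsign

lemma esa_collapse {e : ℕ → X} (he : IsESA e) :
    ∀ (t : ℕ) (c d : ℕ → ℝ) (m i' : ℕ),
    i' + 1 + t < m →
    (∀ p, i' < p → p < i' + 1 + t → c p = 0) →
    0 ≤ c i' * c (i' + 1 + t) →
    d i' = c i' + c (i' + 1 + t) →
    (∀ p, i' < p → p ≤ i' + 1 + t → d p = 0) →
    (∀ q, q < i' ∨ i' + 1 + t < q → d q = c q) →
    ‖combo e d m‖ = ‖combo e c m‖ := by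
  intro t
  induction t with
  | zero =>
    intro c d m i' hm hz hs hd1 hd2 hd3
    exact esa_merge he c d m i' hm hs hd1
      (hd2 (i' + 1) (by omega) (by omega)) (fun i h1 h2 => hd3 i (by omega))
  | succ t ih =>
    intro c d m i' hm hz hs hd1 hd2 hd3
    set j := i' + 1 + t with hj
    have hcj : c j = 0 := hz j (by omega) (by omega)
    set c₁ : ℕ → ℝ := fun p => if p = j then c (j + 1) else if p = j + 1 then 0 else c p with hc₁
    have step : ‖combo e c₁ m‖ = ‖combo e c m‖ := by
      refine esa_merge he c c₁ m j (by omega) (by rw [hcj]; simp) ?_ ?_ ?_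
      · simp [hc₁, hcj]
      · simp [hc₁]
      · intro i h1 h2; simp [hc₁, h1, h2]
    rw [← step]
    refine ih c₁ d m i' (by omega) ?_ ?_ ?_ ?_ ?_
    · intro p h1 h2
      simp only [hc₁]
      rw [if_neg (by omega), if_neg (by omega)]
      exact hz p h1 (by omega)
    · have h1 : c₁ i' = c i' := by simp only [hc₁]; rw [if_neg (by omega), if_neg (by omega)]
      have h2 : c₁ (i' + 1 + t) = c (j + 1) := by simp [hc₁, hj]
      rw [h1, h2]
      convert hs using 3; omega
    · rw [hd1]
      have h1 : c₁ i' = c i' := by simp only [hc₁]; rw [if_neg (by omega), if_neg (by omega)]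
      have h2 : c₁ (i' + 1 + t) = c (j + 1) := by simp [hc₁, hj]
      rw [h1, h2]
      congr 2
    · intro p h1 h2
      exact hd2 p h1 (by omega)
    · intro q hq
      rcases hq with h | h
      · rw [hd3 q (Or.inl h)]
        simp only [hc₁]
        rw [if_neg (by omega), if_neg (by omega)]
      · rcases Nat.eq_or_lt_of_le (Nat.succ_le_of_lt h) with h' | h'
        · have : q = j + 1 := by omega
          subst this
          rw [hd2 (j + 1) (by omega) (by omega)]
          simp [hc₁, hj]
        · rw [hd3 q (Or.inr (by omega))]
          simp only [hc₁]
          rw [if_neg (by omega), if_neg (by omega)]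
end Aux

section Aux2
variable {X : Type*} [NormedAddCommGroup X] [NormedSpace ℝ X]

/-- Coefficient function of a convex block combination. -/
def cfun (F : ℕ → Finset ℕ) (l a : ℕ → ℝ) (n : ℕ) : ℕ → ℝ :=
  fun i => ∑ k ∈ Finset.range n, if i ∈ F k then a k * l i else 0

lemma cfun_of_mem {F : ℕ → Finset ℕ} {l a : ℕ → ℝ} {n k₀ i : ℕ} (hk : k₀ < n) (hi : i ∈ F k₀)
    (huniq : ∀ k, k < n → k ≠ k₀ → i ∉ F k) : cfun F l a n i = a k₀ * l i := by
  unfold cfun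
  rw [Finset.sum_eq_single_of_mem k₀ (Finset.mem_range.mpr hk)]
  · rw [if_pos hi]
  · intro b hb hbne
    rw [if_neg (huniq b (Finset.mem_range.mp hb) hbne)]

lemma cfun_of_not_mem {F : ℕ → Finset ℕ} {l a : ℕ → ℝ} {n i : ℕ}
    (h : ∀ k, k < n → i ∉ F k) : cfun F l a n i = 0 :=
  Finset.sum_eq_zero fun k hk => if_neg (h k (Finset.mem_range.mp hk))

lemma blocks_mono {F : ℕ → Finset ℕ} {n : ℕ}
    (hne : ∀ k, k < n → (F k).Nonempty)
    (hord : ∀ k, k + 1 < n → ∀ i ∈ F k, ∀ j ∈ F (k + 1), i < j) :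
    ∀ k₂, k₂ < n → ∀ k₁, k₁ < k₂ → ∀ i ∈ F k₁, ∀ j ∈ F k₂, i < j := by
  intro k₂
  induction k₂ with
  | zero => omega
  | succ k ih =>
    intro hk2 k₁ hk1 i hi j hj
    rcases Nat.lt_succ_iff_lt_or_eq.mp hk1 with h | rfl
    · obtain ⟨p, hp⟩ := hne k (by omega)
      exact lt_trans (ih (by omega) k₁ h i hi p hp) (hord k hk2 p hp j hj)
    · exact hord k₁ hk2 i hi j hj

lemma blocks_lb {F : ℕ → Finset ℕ} {n : ℕ}
    (hne : ∀ k, k < n → (F k).Nonempty)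
    (hord : ∀ k, k + 1 < n → ∀ i ∈ F k, ∀ j ∈ F (k + 1), i < j) :
    ∀ k, k < n → ∀ i ∈ F k, k ≤ i := by
  intro k
  induction k with
  | zero => intro _ i _; omega
  | succ k ih =>
    intro hk i hi
    obtain ⟨p, hp⟩ := hne k (by omega)
    have h1 : k ≤ p := ih (by omega) p hp
    have h2 : p < i := hord k hk p hp i hi
    omega

lemma combo_cfun (e : ℕ → X) (F : ℕ → Finset ℕ) (l a : ℕ → ℝ) (n m : ℕ)
    (hm : ∀ k, k < n → ∀ i ∈ F k, i < m) :
    combo e (cfun F l a n) m = ∑ k ∈ Finset.range n, a k • ∑ i ∈ F k, l i • e i := by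
  unfold combo cfun
  simp_rw [Finset.sum_smul, ite_smul, zero_smul]
  rw [Finset.sum_comm]
  refine Finset.sum_congr rfl fun k hk => ?_
  have hk' := Finset.mem_range.mp hk
  rw [Finset.smul_sum]
  have hsub : F k ⊆ Finset.range m := fun i hi => Finset.mem_range.mpr (hm k hk' i hi)
  rw [Finset.sum_ite_mem, Finset.inter_eq_right.mpr hsub]
  exact Finset.sum_congr rfl fun i _ => mul_smul (a k) (l i) (e i)

end Aux2

section Main
variable {X : Type*} [NormedAddCommGroup X] [NormedSpace ℝ X]

lemma esa_main {e : ℕ → X} (he : IsESA e) :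
    ∀ (μ n : ℕ) (a l : ℕ → ℝ) (F : ℕ → Finset ℕ) (m : ℕ),
    (∀ k, k < n → (F k).Nonempty) →
    (∀ k, k + 1 < n → ∀ i ∈ F k, ∀ j ∈ F (k + 1), i < j) →
    (∀ i, 0 ≤ l i) →
    (∀ k, k < n → ∑ i ∈ F k, l i = 1) →
    (∀ k, k < n → ∀ i ∈ F k, i < m) →
    (∑ k ∈ Finset.range n, ((F k).card - 1 + ((∑ i ∈ F k, i) - k)) = μ) →
    ‖combo e (cfun F l a n) m‖ = ‖combo e a n‖ := by
  intro μ
  induction μ using Nat.strong_induction_on with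
  | _ μ IH =>
  intro n a l F m hne hord hl0 hl1 hm hμ
  have hmono := blocks_mono hne hord
  have hlb := blocks_lb hne hord
  have hdisj : ∀ i k₁ k₂, k₁ < n → k₂ < n → k₁ ≠ k₂ → i ∈ F k₁ → i ∉ F k₂ := by
    intro i k₁ k₂ h1 h2 hne' hi hi2
    rcases Nat.lt_or_ge k₁ k₂ with h | h
    · exact absurd (hmono k₂ h2 k₁ h i hi i hi2) (lt_irrefl i)
    · have h' : k₂ < k₁ := by omega
      exact absurd (hmono k₁ h1 k₂ h' i hi2 i hi) (lt_irrefl i)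
  by_cases hbase : ∀ k, k < n → F k = {k}
  · -- base case
    have hc : ∀ i, i < n → cfun F l a n i = a i := by
      intro i hi
      have h1 : l i = 1 := by
        have := hl1 i hi; rwa [hbase i hi, Finset.sum_singleton] at this
      rw [cfun_of_mem hi (by rw [hbase i hi]; exact Finset.mem_singleton_self i)
        (fun k hk hkne => by rw [hbase k hk]; simp [Ne.symm hkne]), h1, mul_one]
    have hz : ∀ i, n ≤ i → cfun F l a n i = 0 := by
      intro i hi
      refine cfun_of_not_mem fun k hk => ?_
      rw [hbase k hk]; simp; omega
    have hnm : n ≤ m := by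
      rcases Nat.eq_zero_or_pos n with rfl | hn
      · omega
      · have := hm (n - 1) (by omega) (n - 1)
          (by rw [hbase (n - 1) (by omega)]; exact Finset.mem_singleton_self _)
        omega
    unfold combo
    rw [← Finset.sum_subset (Finset.range_subset_range.mpr hnm)
      (fun i _ hi => by rw [hz i (by simp [Finset.mem_range] at hi; omega)]; simp)]
    exact congrArg _ (Finset.sum_congr rfl fun i hi => by rw [hc i (Finset.mem_range.mp hi)])
  · have hex : ∃ k, k < n ∧ F k ≠ {k} := by push_neg at hbase; exact hbase
    classical
    set k₀ := Nat.find hex with hk₀def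
    obtain ⟨hk₀n, hk₀ne⟩ := Nat.find_spec hex
    have hmin : ∀ k, k < k₀ → k < n → F k = {k} := by
      intro k hk hkn
      by_contra hne'
      exact Nat.find_min hex hk ⟨hkn, hne'⟩
    by_cases h2 : 2 ≤ (F k₀).card
    · -- Case A: the block k₀ has at least two elements; merge the top two.
      set i := (F k₀).max' (hne k₀ hk₀n) with hidef
      have himem : i ∈ F k₀ := Finset.max'_mem _ _
      have him : i < m := hm k₀ hk₀n i himem
      have hine : ((F k₀).erase i).Nonempty := by
        rw [← Finset.card_pos, Finset.card_erase_of_mem himem]; omega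
      set i' := ((F k₀).erase i).max' hine with hi'def
      have hi'er : i' ∈ (F k₀).erase i := Finset.max'_mem _ _
      have hi'F : i' ∈ F k₀ := Finset.mem_of_mem_erase hi'er
      have hi'lt : i' < i :=
        lt_of_le_of_ne (Finset.le_max' _ _ hi'F) (Finset.ne_of_mem_erase hi'er)
      set F' := Function.update F k₀ ((F k₀).erase i) with hF'def
      set l' : ℕ → ℝ := fun p => if p = i' then l i' + l i else if p = i then 0 else l p
        with hl'def
      have hF'k₀ : F' k₀ = (F k₀).erase i := Function.update_self _ _ _
      have hF'other : ∀ k, k ≠ k₀ → F' k = F k := fun k hk => Function.update_of_ne hk _ _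
      have hsub : ∀ k, F' k ⊆ F k := by
        intro k
        by_cases hk : k = k₀
        · subst hk; rw [hF'k₀]; exact Finset.erase_subset _ _
        · rw [hF'other k hk]
      have hbetween : ∀ p, i' < p → p < i → ∀ k, k < n → p ∉ F k := by
        intro p hp1 hp2 k hk hmem
        rcases lt_trichotomy k k₀ with h | rfl | h
        · exact absurd (hmono k₀ hk₀n k h p hmem i' hi'F) (by omega)
        · have hpe : p ∈ (F k₀).erase i := Finset.mem_erase.mpr ⟨by omega, hmem⟩
          exact absurd (Finset.le_max' _ p hpe) (by omega)
        · exact absurd (hmono k hk k₀ h i himem p hmem) (by omega)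
      have hci' : cfun F l a n i' = a k₀ * l i' :=
        cfun_of_mem hk₀n hi'F (fun k hk hkne => hdisj i' k₀ k hk₀n hk (Ne.symm hkne) hi'F)
      have hci : cfun F l a n i = a k₀ * l i :=
        cfun_of_mem hk₀n himem (fun k hk hkne => hdisj i k₀ k hk₀n hk (Ne.symm hkne) himem)
      have hcz : ∀ p, i' < p → p < i → cfun F l a n p = 0 :=
        fun p h1 h2 => cfun_of_not_mem (hbetween p h1 h2)
      have hd1 : cfun F' l' a n i' = cfun F l a n i' + cfun F l a n i := by
        have hmem' : i' ∈ F' k₀ := by rw [hF'k₀]; exact hi'er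
        have huniq : ∀ k, k < n → k ≠ k₀ → i' ∉ F' k := by
          intro k hk hkne hmem
          exact hdisj i' k₀ k hk₀n hk (Ne.symm hkne) hi'F (hsub k hmem)
        rw [cfun_of_mem hk₀n hmem' huniq, hci', hci]
        have hli' : l' i' = l i' + l i := by simp [hl'def]
        rw [hli']; ring
      have hd2 : ∀ p, i' < p → p ≤ i → cfun F' l' a n p = 0 := by
        intro p h1 h2
        refine cfun_of_not_mem fun k hk hmem => ?_
        rcases Nat.eq_or_lt_of_le h2 with hpe | h2'
        · subst hpe
          by_cases hkk : k = k₀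
          · subst hkk; rw [hF'k₀] at hmem
            exact (Finset.ne_of_mem_erase hmem) rfl
          · rw [hF'other k hkk] at hmem
            exact hdisj i k₀ k hk₀n hk (Ne.symm hkk) himem hmem
        · exact hbetween p h1 h2' k hk (hsub k hmem)
      have hd3 : ∀ q, q < i' ∨ i < q → cfun F' l' a n q = cfun F l a n q := by
        intro q hq
        have hqi' : q ≠ i' := by omega
        have hqi : q ≠ i := by omega
        unfold cfun
        refine Finset.sum_congr rfl fun k hk => ?_
        have hiff : q ∈ F' k ↔ q ∈ F k := by
          by_cases hkk : k = k₀
          · subst hkk; rw [hF'k₀]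
            simp [Finset.mem_erase, hqi]
          · rw [hF'other k hkk]
        have hlq : l' q = l q := by simp [hl'def, hqi', hqi]
        rw [hlq]
        exact if_congr hiff rfl rfl
      have hne' : ∀ k, k < n → (F' k).Nonempty := by
        intro k hk
        by_cases hkk : k = k₀
        · subst hkk; rw [hF'k₀]; exact hine
        · rw [hF'other k hkk]; exact hne k hk
      have hord' : ∀ k, k + 1 < n → ∀ p ∈ F' k, ∀ q ∈ F' (k + 1), p < q :=
        fun k hk p hp q hq => hord k hk p (hsub k hp) q (hsub _ hq)
      have hl0' : ∀ p, 0 ≤ l' p := by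
        intro p
        simp only [hl'def]
        split_ifs with h h
        · exact add_nonneg (hl0 i') (hl0 i)
        · exact le_refl 0
        · exact hl0 p
      have hl1' : ∀ k, k < n → ∑ p ∈ F' k, l' p = 1 := by
        intro k hk
        by_cases hkk : k = k₀
        · subst hkk
          rw [hF'k₀]
          have hstep : ∀ p ∈ (F k₀).erase i, l' p = l p + (if p = i' then l i else 0) := by
            intro p hp
            have hpi : p ≠ i := Finset.ne_of_mem_erase hp
            by_cases hpi' : p = i'
            · subst hpi'; simp [hl'def]
            · simp [hl'def, hpi, hpi']
          rw [Finset.sum_congr rfl hstep, Finset.sum_add_distrib,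
            Finset.sum_ite_eq' _ i' (fun _ => l i), if_pos hi'er]
          have hh := hl1 k₀ hk₀n
          rw [← Finset.sum_erase_add _ _ himem] at hh
          linarith
        · rw [hF'other k hkk, ← hl1 k hk]
          refine Finset.sum_congr rfl fun p hp => ?_
          have h1 : p ≠ i' := fun h => hdisj i' k₀ k hk₀n hk (Ne.symm hkk) hi'F (h ▸ hp)
          have hh2 : p ≠ i := fun h => hdisj i k₀ k hk₀n hk (Ne.symm hkk) himem (h ▸ hp)
          simp [hl'def, h1, hh2]
      have hm' : ∀ k, k < n → ∀ p ∈ F' k, p < m := fun k hk p hp => hm k hk p (hsub k hp)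
      have hsum_er : (∑ p ∈ (F k₀).erase i, p) + i = ∑ p ∈ F k₀, p :=
        Finset.sum_erase_add _ _ himem
      have hcard_er : ((F k₀).erase i).card = (F k₀).card - 1 :=
        Finset.card_erase_of_mem himem
      set μ' := ∑ k ∈ Finset.range n, ((F' k).card - 1 + ((∑ p ∈ F' k, p) - k)) with hμ'
      have hlt : μ' < μ := by
        rw [← hμ, hμ']
        apply Finset.sum_lt_sum
        · intro k hk
          by_cases hkk : k = k₀
          · subst hkk
            rw [hF'k₀, hcard_er]
            omega
          · rw [hF'other k hkk]
        · refine ⟨k₀, Finset.mem_range.mpr hk₀n, ?_⟩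
          rw [hF'k₀, hcard_er]
          omega
      have hIH := IH μ' hlt n a l' F' m hne' hord' hl0' hl1' hm' hμ'.symm
      obtain ⟨t, ht⟩ : ∃ t, i = i' + 1 + t := ⟨i - i' - 1, by omega⟩
      have hcol : ‖combo e (cfun F' l' a n) m‖ = ‖combo e (cfun F l a n) m‖ := by
        refine esa_collapse he t (cfun F l a n) (cfun F' l' a n) m i' (by omega) ?_ ?_ ?_ ?_ ?_
        · intro p hp1 hp2; exact hcz p hp1 (by omega)
        · rw [← ht, hci', hci]
          have hrr : a k₀ * l i' * (a k₀ * l i) = (a k₀ * a k₀) * (l i' * l i) := by ring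
          rw [hrr]
          exact mul_nonneg (mul_self_nonneg _) (mul_nonneg (hl0 i') (hl0 i))
        · rw [← ht]; exact hd1
        · intro p hp1 hp2; exact hd2 p hp1 (by omega)
        · intro q hq; exact hd3 q (by omega)
      rw [← hcol]; exact hIH
    · -- Case B: block k₀ is a singleton {j} with k₀ < j; shift it one step left.
      have hcard1 : (F k₀).card = 1 := by
        have := Finset.card_pos.mpr (hne k₀ hk₀n); omega
      obtain ⟨j, hj⟩ := Finset.card_eq_one.mp hcard1
      have hjF : j ∈ F k₀ := by rw [hj]; exact Finset.mem_singleton_self j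
      have hjk : k₀ < j := by
        have h1 : k₀ ≤ j := hlb k₀ hk₀n j hjF
        rcases Nat.eq_or_lt_of_le h1 with h | h
        · exact absurd (by rw [hj, ← h]) hk₀ne
        · exact h
      have hjm : j < m := hm k₀ hk₀n j hjF
      set F' := Function.update F k₀ ({j - 1} : Finset ℕ) with hF'def
      set l' : ℕ → ℝ := fun p => if p = j - 1 then 1 else if p = j then 0 else l p with hl'def
      have hF'k₀ : F' k₀ = {j - 1} := Function.update_self _ _ _
      have hF'other : ∀ k, k ≠ k₀ → F' k = F k := fun k hk => Function.update_of_ne hk _ _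
      have hlj : l j = 1 := by
        have := hl1 k₀ hk₀n; rwa [hj, Finset.sum_singleton] at this
      have hj1 : ∀ k, k < n → j - 1 ∉ F k := by
        intro k hk hmem
        rcases lt_trichotomy k k₀ with h | rfl | h
        · rw [hmin k h hk] at hmem
          have := Finset.mem_singleton.mp hmem
          omega
        · rw [hj] at hmem
          have := Finset.mem_singleton.mp hmem
          omega
        · exact absurd (hmono k hk k₀ h j hjF (j - 1) hmem) (by omega)
      have hcj1 : cfun F l a n (j - 1) = 0 := cfun_of_not_mem hj1
      have hcj : cfun F l a n j = a k₀ * l j :=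
        cfun_of_mem hk₀n hjF (fun k hk hkne => hdisj j k₀ k hk₀n hk (Ne.symm hkne) hjF)
      have hd1 : cfun F' l' a n (j - 1) = cfun F l a n (j - 1) + cfun F l a n j := by
        have hmem' : j - 1 ∈ F' k₀ := by rw [hF'k₀]; exact Finset.mem_singleton_self _
        have huniq : ∀ k, k < n → k ≠ k₀ → j - 1 ∉ F' k := by
          intro k hk hkne hmem
          rw [hF'other k hkne] at hmem
          exact hj1 k hk hmem
        rw [cfun_of_mem hk₀n hmem' huniq, hcj1, hcj, hlj]
        have hll : l' (j - 1) = 1 := by simp [hl'def]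
        rw [hll]; ring
      have hd2 : ∀ p, j - 1 < p → p ≤ j → cfun F' l' a n p = 0 := by
        intro p h1' h2'
        have hpj : p = j := by omega
        subst hpj
        refine cfun_of_not_mem fun k hk hmem => ?_
        by_cases hkk : k = k₀
        · subst hkk; rw [hF'k₀] at hmem
          have := Finset.mem_singleton.mp hmem
          omega
        · rw [hF'other k hkk] at hmem
          exact hdisj p k₀ k hk₀n hk (Ne.symm hkk) hjF hmem
      have hd3 : ∀ q, q < j - 1 ∨ j < q → cfun F' l' a n q = cfun F l a n q := by
        intro q hq
        have hq1 : q ≠ j - 1 := by omega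
        have hq2 : q ≠ j := by omega
        unfold cfun
        refine Finset.sum_congr rfl fun k hk => ?_
        have hiff : q ∈ F' k ↔ q ∈ F k := by
          by_cases hkk : k = k₀
          · subst hkk; rw [hF'k₀, hj]; simp [hq1, hq2]
          · rw [hF'other k hkk]
        have hlq : l' q = l q := by simp [hl'def, hq1, hq2]
        rw [hlq]
        exact if_congr hiff rfl rfl
      have hne' : ∀ k, k < n → (F' k).Nonempty := by
        intro k hk
        by_cases hkk : k = k₀
        · subst hkk; rw [hF'k₀]; exact ⟨j - 1, Finset.mem_singleton_self _⟩
        · rw [hF'other k hkk]; exact hne k hk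
      have hord' : ∀ k, k + 1 < n → ∀ p ∈ F' k, ∀ q ∈ F' (k + 1), p < q := by
        intro k hk p hp q hq
        by_cases hk1 : k = k₀
        · subst hk1
          rw [hF'k₀] at hp
          have hp' : p = j - 1 := Finset.mem_singleton.mp hp
          have hq' : q ∈ F (k₀ + 1) := by
            rw [hF'other (k₀ + 1) (by omega)] at hq
            exact hq
          have hjq : j < q := hmono (k₀ + 1) hk k₀ (by omega) j hjF q hq'
          omega
        · by_cases hk2 : k + 1 = k₀
          · rw [hF'other k hk1] at hp
            rw [hk2, hF'k₀] at hq
            have hq' : q = j - 1 := Finset.mem_singleton.mp hq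
            have hkk₀ : k < k₀ := by omega
            rw [hmin k hkk₀ (by omega)] at hp
            have hp' : p = k := Finset.mem_singleton.mp hp
            omega
          · rw [hF'other k hk1] at hp
            rw [hF'other (k + 1) hk2] at hq
            exact hord k hk p hp q hq
      have hl0' : ∀ p, 0 ≤ l' p := by
        intro p
        simp only [hl'def]
        split_ifs with h h
        · exact zero_le_one
        · exact le_refl 0
        · exact hl0 p
      have hl1' : ∀ k, k < n → ∑ p ∈ F' k, l' p = 1 := by
        intro k hk
        by_cases hkk : k = k₀
        · subst hkk
          rw [hF'k₀, Finset.sum_singleton]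
          simp [hl'def]
        · rw [hF'other k hkk, ← hl1 k hk]
          refine Finset.sum_congr rfl fun p hp => ?_
          have h1 : p ≠ j - 1 := fun h => hj1 k hk (h ▸ hp)
          have hh2 : p ≠ j := fun h => hdisj j k₀ k hk₀n hk (Ne.symm hkk) hjF (h ▸ hp)
          simp [hl'def, h1, hh2]
      have hm' : ∀ k, k < n → ∀ p ∈ F' k, p < m := by
        intro k hk p hp
        by_cases hkk : k = k₀
        · subst hkk; rw [hF'k₀] at hp
          have := Finset.mem_singleton.mp hp
          omega
        · rw [hF'other k hkk] at hp
          exact hm k hk p hp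
      set μ' := ∑ k ∈ Finset.range n, ((F' k).card - 1 + ((∑ p ∈ F' k, p) - k)) with hμ'
      have hlt : μ' < μ := by
        rw [← hμ, hμ']
        apply Finset.sum_lt_sum
        · intro k hk
          by_cases hkk : k = k₀
          · subst hkk
            rw [hF'k₀, hj]
            simp only [Finset.card_singleton, Finset.sum_singleton]
            omega
          · rw [hF'other k hkk]
        · refine ⟨k₀, Finset.mem_range.mpr hk₀n, ?_⟩
          rw [hF'k₀, hj]
          simp only [Finset.card_singleton, Finset.sum_singleton]
          omega
      have hIH := IH μ' hlt n a l' F' m hne' hord' hl0' hl1' hm' hμ'.symm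
      have hcol : ‖combo e (cfun F' l' a n) m‖ = ‖combo e (cfun F l a n) m‖ := by
        have hje : j = (j - 1) + 1 + 0 := by omega
        refine esa_collapse he 0 (cfun F l a n) (cfun F' l' a n) m (j - 1)
          (by omega) ?_ ?_ ?_ ?_ ?_
        · intro p hp1 hp2; omega
        · rw [← hje, hcj1]; simp
        · rw [← hje]; exact hd1
        · intro p hp1 hp2; exact hd2 p hp1 (by omega)
        · intro q hq; exact hd3 q (by omega)
      rw [← hcol]; exact hIH

end Main


/-- A Schauder basis is equal signs additive if and only if it is
1-convex block homogeneous. -/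
theorem statement3 {X : Type*} [NormedAddCommGroup X] [NormedSpace ℝ X] [CompleteSpace X]
    (e : ℕ → X) (he : IsSchauderBasis e) :
    IsESA e ↔ IsOneConvexBlockHomogeneous e := by
  constructor
  · -- ESA implies 1-convex block homogeneous
    intro hesa w hw n a
    obtain ⟨F, l, hne, hord, hl0, hl1, hwdef⟩ := hw
    set m := 1 + (Finset.range n).sup (fun k => (F k).sup id) with hmdef
    have hmbound : ∀ k, k < n → ∀ i ∈ F k, i < m := by
      intro k hk i hi
      have h1 : i ≤ (F k).sup id := Finset.le_sup (f := id) hi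
      have h2 : (F k).sup id ≤ (Finset.range n).sup (fun k => (F k).sup id) :=
        Finset.le_sup (f := fun k => (F k).sup id) (Finset.mem_range.mpr hk)
      omega
    have hmain := esa_main hesa _ n a l F m
      (fun k _ => hne k) (fun k _ => hord k) hl0 (fun k _ => hl1 k) hmbound rfl
    have hcombo : combo e (cfun F l a n) m = combo w a n := by
      rw [combo_cfun e F l a n m hmbound]
      unfold combo
      exact Finset.sum_congr rfl fun k _ => by rw [hwdef k]
    exact hmain.symm.trans (congrArg norm hcombo)
  · -- 1-convex block homogeneous implies ESA
    intro hcbh a n k hkn hsign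
    set s := a k + a (k + 1) with hsdef
    by_cases hs0 : s = 0
    · have hak : a k = -a (k + 1) := by rw [hsdef] at hs0; linarith
      have h1 : a (k + 1) * a (k + 1) ≤ 0 := by
        rw [hak] at hsign; nlinarith
      have h2 : a (k + 1) = 0 :=
        mul_self_eq_zero.mp (le_antisymm h1 (mul_self_nonneg _))
      rw [h2]; simp
    · have hsigns : (0 ≤ a k ∧ 0 ≤ a (k + 1)) ∨ (a k ≤ 0 ∧ a (k + 1) ≤ 0) := by
        rcases mul_nonneg_iff.mp hsign with h | h
        · exact Or.inl h
        · exact Or.inr h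
      have hdiv1 : 0 ≤ a k / s := by
        rcases hsigns with ⟨h1, h2⟩ | ⟨h1, h2⟩
        · exact div_nonneg h1 (by rw [hsdef]; linarith)
        · apply div_nonneg_of_nonpos h1
          rcases lt_or_eq_of_le (by rw [hsdef]; linarith : s ≤ 0) with h | h
          · linarith
          · exact absurd h hs0
      have hdiv2 : 0 ≤ a (k + 1) / s := by
        rcases hsigns with ⟨h1, h2⟩ | ⟨h1, h2⟩
        · exact div_nonneg h2 (by rw [hsdef]; linarith)
        · apply div_nonneg_of_nonpos h2
          rcases lt_or_eq_of_le (by rw [hsdef]; linarith : s ≤ 0) with h | h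
          · linarith
          · exact absurd h hs0
      -- the splitting convex block sequence
      set l₁ : ℕ → ℝ := fun i => if i = k then a k / s else if i = k + 1 then a (k + 1) / s
        else 1 with hl₁
      set F₁ : ℕ → Finset ℕ := fun j => if j < k then {j} else if j = k then {k, k + 1}
        else {j + 1} with hF₁
      set w₁ : ℕ → X := fun j => ∑ i ∈ F₁ j, l₁ i • e i with hw₁
      have hchar : ∀ j i, i ∈ F₁ j ↔
          (j < k ∧ i = j) ∨ (j = k ∧ (i = k ∨ i = k + 1)) ∨ (k < j ∧ i = j + 1) := by
        intro j i
        simp only [hF₁]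
        split_ifs with h1 h2 <;>
          simp only [Finset.mem_insert, Finset.mem_singleton] <;> omega
      have hl₁k : l₁ k = a k / s := by simp [hl₁]
      have hl₁k1 : l₁ (k + 1) = a (k + 1) / s := by
        simp [hl₁, show k + 1 ≠ k from by omega]
      have hl₁o : ∀ i, i ≠ k → i ≠ k + 1 → l₁ i = 1 := by
        intro i hi1 hi2; simp [hl₁, hi1, hi2]
      have hF₁lo : ∀ j, j < k → F₁ j = {j} := by intro j hj; simp [hF₁, hj]
      have hF₁k : F₁ k = {k, k + 1} := by simp [hF₁]
      have hF₁hi : ∀ j, k < j → F₁ j = {j + 1} := by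
        intro j hj
        simp [hF₁, show ¬ j < k from by omega, show j ≠ k from by omega]
      have hblock₁ : IsConvexBlock e w₁ := by
        refine ⟨F₁, l₁, ?_, ?_, ?_, ?_, fun j => rfl⟩
        · intro j
          rcases lt_trichotomy j k with h | h | h
          · exact ⟨j, by rw [hF₁lo j h]; exact Finset.mem_singleton_self j⟩
          · exact ⟨k, by rw [h, hF₁k]; exact Finset.mem_insert_self _ _⟩
          · exact ⟨j + 1, by rw [hF₁hi j h]; exact Finset.mem_singleton_self _⟩
        · intro j i hi i' hi'
          rw [hchar] at hi hi'
          omega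
        · intro i
          simp only [hl₁]
          split_ifs
          · exact hdiv1
          · exact hdiv2
          · exact zero_le_one
        · intro j
          rcases lt_trichotomy j k with h | h | h
          · rw [hF₁lo j h, Finset.sum_singleton,
              hl₁o j (by omega) (by omega)]
          · rw [h, hF₁k, Finset.sum_pair (by omega : k ≠ k + 1), hl₁k, hl₁k1]
            field_simp; exact hsdef.symm
          · rw [hF₁hi j h, Finset.sum_singleton,
              hl₁o (j + 1) (by omega) (by omega)]
      -- the shifting convex block sequence
      set F₂ : ℕ → Finset ℕ := fun j => if j ≤ k then {j} else {j + 1} with hF₂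
      set w₂ : ℕ → X := fun j => ∑ i ∈ F₂ j, (1 : ℝ) • e i with hw₂
      have hF₂lo : ∀ j, j ≤ k → F₂ j = {j} := by intro j hj; simp [hF₂, hj]
      have hF₂hi : ∀ j, k < j → F₂ j = {j + 1} := by
        intro j hj; simp [hF₂, show ¬ j ≤ k from by omega]
      have hblock₂ : IsConvexBlock e w₂ := by
        refine ⟨F₂, fun _ => (1 : ℝ), ?_, ?_, fun i => zero_le_one, ?_, fun j => rfl⟩
        · intro j
          rcases le_or_gt j k with h | h
          · exact ⟨j, by rw [hF₂lo j h]; exact Finset.mem_singleton_self j⟩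
          · exact ⟨j + 1, by rw [hF₂hi j h]; exact Finset.mem_singleton_self _⟩
        · intro j i hi i' hi'
          rcases le_or_gt j k with h | h
          · rw [hF₂lo j h] at hi
            have hij : i = j := Finset.mem_singleton.mp hi
            rcases le_or_gt (j + 1) k with h' | h'
            · rw [hF₂lo (j + 1) h'] at hi'
              have := Finset.mem_singleton.mp hi'
              omega
            · rw [hF₂hi (j + 1) h'] at hi'
              have := Finset.mem_singleton.mp hi'
              omega
          · rw [hF₂hi j h] at hi
            rw [hF₂hi (j + 1) (by omega)] at hi'
            have h1 := Finset.mem_singleton.mp hi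
            have h2 := Finset.mem_singleton.mp hi'
            omega
        · intro j
          rcases le_or_gt j k with h | h
          · rw [hF₂lo j h, Finset.sum_singleton]
          · rw [hF₂hi j h, Finset.sum_singleton]
      have hiso₁ := hcbh w₁ hblock₁
      have hiso₂ := hcbh w₂ hblock₂
      set b : ℕ → ℝ := fun j => if j < k then a j else if j = k then s else a (j + 1) with hb
      have hblo : ∀ j, j < k → b j = a j := by intro j hj; simp [hb, hj]
      have hbk : b k = s := by simp [hb]
      have hbhi : ∀ j, k < j → b j = a (j + 1) := by
        intro j hj
        simp [hb, show ¬ j < k from by omega, show j ≠ k from by omega]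
      -- sum splitting helpers
      have hico1 : Finset.Ico k (k + 1) = {k} := by
        ext x; simp [Finset.mem_Ico]
      have hico2 : Finset.Ico (k + 1) (k + 2) = {k + 1} := by
        ext x
        simp only [Finset.mem_Ico, Finset.mem_singleton]
        omega
      have hsplitL : ∀ (f : ℕ → X), ∑ j ∈ Finset.range (n - 1), f j
          = ∑ j ∈ Finset.range k, f j + f k + ∑ j ∈ Finset.Ico (k + 1) (n - 1), f j := by
        intro f
        rw [Finset.range_eq_Ico,
          ← Finset.sum_Ico_consecutive f (by omega : 0 ≤ k + 1) (by omega : k + 1 ≤ n - 1),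
          ← Finset.sum_Ico_consecutive f (by omega : 0 ≤ k) (by omega : k ≤ k + 1),
          hico1, Finset.sum_singleton, Finset.range_eq_Ico]
      have hsplitR : ∀ (f : ℕ → X), ∑ j ∈ Finset.range n, f j
          = ∑ j ∈ Finset.range k, f j + f k + f (k + 1) + ∑ j ∈ Finset.Ico (k + 2) n, f j := by
        intro f
        rw [Finset.range_eq_Ico,
          ← Finset.sum_Ico_consecutive f (by omega : 0 ≤ k + 2) (by omega : k + 2 ≤ n),
          ← Finset.sum_Ico_consecutive f (by omega : 0 ≤ k + 1) (by omega : k + 1 ≤ k + 2),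
          ← Finset.sum_Ico_consecutive f (by omega : 0 ≤ k) (by omega : k ≤ k + 1),
          hico1, hico2, Finset.sum_singleton, Finset.sum_singleton, Finset.range_eq_Ico]
      have hre : ∀ (f : ℕ → X), ∑ j ∈ Finset.Ico (k + 1) (n - 1), f (j + 1)
          = ∑ i ∈ Finset.Ico (k + 2) n, f i := by
        intro f
        rw [Finset.sum_Ico_eq_sum_range, Finset.sum_Ico_eq_sum_range]
        have hlen : n - 1 - (k + 1) = n - (k + 2) := by omega
        rw [hlen]
        exact Finset.sum_congr rfl fun j _ => by congr 1; omega
      -- values of w₁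
      have hw₁lo : ∀ j, j < k → w₁ j = e j := by
        intro j hj
        simp only [hw₁]
        rw [hF₁lo j hj, Finset.sum_singleton, hl₁o j (by omega) (by omega), one_smul]
      have hw₁k : w₁ k = (a k / s) • e k + (a (k + 1) / s) • e (k + 1) := by
        simp only [hw₁]
        rw [hF₁k, Finset.sum_pair (by omega : k ≠ k + 1), hl₁k, hl₁k1]
      have hw₁hi : ∀ j, k < j → w₁ j = e (j + 1) := by
        intro j hj
        simp only [hw₁]
        rw [hF₁hi j hj, Finset.sum_singleton, hl₁o (j + 1) (by omega) (by omega), one_smul]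
      -- values of w₂
      have hw₂lo : ∀ j, j ≤ k → w₂ j = e j := by
        intro j hj
        simp only [hw₂]
        rw [hF₂lo j hj, Finset.sum_singleton, one_smul]
      have hw₂hi : ∀ j, k < j → w₂ j = e (j + 1) := by
        intro j hj
        simp only [hw₂]
        rw [hF₂hi j hj, Finset.sum_singleton, one_smul]
      -- the two combo computations
      have hval₁ : combo w₁ b (n - 1) = combo e a n := by
        unfold combo
        rw [hsplitL (fun j => b j • w₁ j), hsplitR (fun i => a i • e i)]
        have hA : ∑ j ∈ Finset.range k, b j • w₁ j = ∑ j ∈ Finset.range k, a j • e j := by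
          refine Finset.sum_congr rfl fun j hj => ?_
          have hjk := Finset.mem_range.mp hj
          rw [hw₁lo j hjk, hblo j hjk]
        have hB : b k • w₁ k = a k • e k + a (k + 1) • e (k + 1) := by
          rw [hbk, hw₁k, smul_add, smul_smul, smul_smul]
          have e1 : s * (a k / s) = a k := by field_simp
          have e2 : s * (a (k + 1) / s) = a (k + 1) := by field_simp
          rw [e1, e2]
        have hC : ∑ j ∈ Finset.Ico (k + 1) (n - 1), b j • w₁ j
            = ∑ i ∈ Finset.Ico (k + 2) n, a i • e i := by
          rw [← hre (fun i => a i • e i)]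
          refine Finset.sum_congr rfl fun j hj => ?_
          have hjk : k < j := by have := Finset.mem_Ico.mp hj; omega
          rw [hw₁hi j hjk, hbhi j hjk]
        rw [hA, hB, hC]
        abel
      have hval₂ : combo w₂ b (n - 1) = combo e a n + a (k + 1) • (e k - e (k + 1)) := by
        unfold combo
        rw [hsplitL (fun j => b j • w₂ j), hsplitR (fun i => a i • e i)]
        have hA : ∑ j ∈ Finset.range k, b j • w₂ j = ∑ j ∈ Finset.range k, a j • e j := by
          refine Finset.sum_congr rfl fun j hj => ?_
          have hjk := Finset.mem_range.mp hj
          rw [hw₂lo j (by omega), hblo j hjk]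
        have hB : b k • w₂ k = s • e k := by
          rw [hbk, hw₂lo k (le_refl k)]
        have hC : ∑ j ∈ Finset.Ico (k + 1) (n - 1), b j • w₂ j
            = ∑ i ∈ Finset.Ico (k + 2) n, a i • e i := by
          rw [← hre (fun i => a i • e i)]
          refine Finset.sum_congr rfl fun j hj => ?_
          have hjk : k < j := by have := Finset.mem_Ico.mp hj; omega
          rw [hw₂hi j hjk, hbhi j hjk]
        rw [hA, hB, hC, hsdef, add_smul, smul_sub]
        abel
      calc ‖combo e a n + a (k + 1) • (e k - e (k + 1))‖
          = ‖combo w₂ b (n - 1)‖ := by rw [hval₂]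
        _ = ‖combo e b (n - 1)‖ := (hiso₂ (n - 1) b).symm
        _ = ‖combo w₁ b (n - 1)‖ := hiso₁ (n - 1) b
        _ = ‖combo e a n‖ := by rw [hval₁]
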